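/- arXiv:2509.10944 — 5 statements merged into one kernel-verified Lean document; each statement's English description precedes it below -/
import Mathlib

section
/- For every A > 0 and δ > δ₀ > 0 there exist N' ∈ ℕ and B > 0 such that: if (b_n) and (c_n) are sequences of positive reals satisfying b_n ≤ A e^{δ n}, c_n ≤ A e^{δ₀ n}, and ∑_{k=0}^{n} b_k c_{n−k} ≥ A⁻¹ e^{δ n} for all n, then ∑_{k=1}^{N'} b_{n+k} ≥ B e^{δ n} for all n. -/
/-!
Put `r = e^δ` and `r₀ = e^δ₀`. Split the convolution at `n + m` into the terms `k ≤ n` and the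
`m` terms `k = n + j`. Bounding `b` and `c` by their growth rates, the first part is at most
`A² r r₀^m r^n / (r - r₀)` (a geometric sum), the second at most `A r₀^m ∑_{j=1}^m b (n + j)`,
while the whole convolution is at least `A⁻¹ r^m r^n`. Once `(r / r₀)^m` is large, the first part is
at most half of that lower bound, so `∑_{j=1}^m b (n + j) ≥ A r / (r - r₀) · r^n`.
-/

open Finset

theorem sum_range_succ_add_eq_add_sum_Icc {M : Type*} [AddCommMonoid M] (f : ℕ → M) (n m : ℕ) :
    ∑ k ∈ range (n + m + 1), f k = ∑ k ∈ range (n + 1), f k + ∑ j ∈ Icc 1 m, f (n + j) := by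
  induction m with
  | zero => simp
  | succ m ih =>
    rw [← add_assoc n m 1, sum_range_succ, ih, sum_Icc_succ_top (by omega), add_assoc,
      add_assoc n m 1]

theorem sum_pow_mul_pow_sub_le_div {r r₀ : ℝ} (h₀ : 0 ≤ r₀) (h : r₀ < r) (n : ℕ) :
    ∑ k ∈ range (n + 1), r ^ k * r₀ ^ (n - k) ≤ r ^ (n + 1) / (r - r₀) := by
  have hgeom := geom_sum₂_mul r r₀ (n + 1)
  rw [Nat.add_sub_cancel] at hgeom
  rw [le_div_iff₀ (sub_pos.2 h), hgeom]
  linarith [pow_nonneg h₀ (n + 1)]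

section GeometricConvolution

variable {A r r₀ : ℝ} {b c : ℕ → ℝ}

theorem convolution_head_le (h₀ : 0 ≤ r₀) (h : r₀ < r)
    (hb : ∀ n, 0 ≤ b n) (hc : ∀ n, 0 ≤ c n)
    (hbA : ∀ n, b n ≤ A * r ^ n) (hcA : ∀ n, c n ≤ A * r₀ ^ n) (n m : ℕ) :
    ∑ k ∈ range (n + 1), b k * c (n + m - k) ≤ A ^ 2 * r / (r - r₀) * r₀ ^ m * r ^ n :=
  calc ∑ k ∈ range (n + 1), b k * c (n + m - k)
      ≤ ∑ k ∈ range (n + 1), A ^ 2 * r₀ ^ m * (r ^ k * r₀ ^ (n - k)) := by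
        refine sum_le_sum fun k hk => ?_
        have hkn : n + m - k = m + (n - k) := by
          have := mem_range_succ_iff.1 hk
          omega
        calc b k * c (n + m - k) ≤ (A * r ^ k) * (A * r₀ ^ (n + m - k)) :=
              mul_le_mul (hbA k) (hcA _) (hc _) ((hb k).trans (hbA k))
          _ = A ^ 2 * r₀ ^ m * (r ^ k * r₀ ^ (n - k)) := by rw [hkn, pow_add]; ring
    _ ≤ A ^ 2 * r₀ ^ m * (r ^ (n + 1) / (r - r₀)) := by
        rw [← mul_sum]
        gcongr
        exact sum_pow_mul_pow_sub_le_div h₀ h n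
    _ = A ^ 2 * r / (r - r₀) * r₀ ^ m * r ^ n := by ring

theorem convolution_tail_le (hA : 0 ≤ A) (h₀ : 1 ≤ r₀) (hb : ∀ n, 0 ≤ b n)
    (hcA : ∀ n, c n ≤ A * r₀ ^ n) (n m : ℕ) :
    ∑ j ∈ Icc 1 m, b (n + j) * c (n + m - (n + j)) ≤ A * r₀ ^ m * ∑ j ∈ Icc 1 m, b (n + j) := by
  rw [mul_sum]
  refine sum_le_sum fun j _ => ?_
  have hc : c (n + m - (n + j)) ≤ A * r₀ ^ m :=
    (hcA _).trans (by gcongr; omega)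
  calc b (n + j) * c (n + m - (n + j)) ≤ b (n + j) * (A * r₀ ^ m) := by gcongr; exact hb _
    _ = A * r₀ ^ m * b (n + j) := mul_comm _ _

theorem exists_sum_Icc_ge_of_convolution_ge (hA : 0 < A) (h₀ : 1 ≤ r₀) (h : r₀ < r) :
    ∃ m : ℕ, ∀ b c : ℕ → ℝ, (∀ n, 0 ≤ b n) → (∀ n, 0 ≤ c n) →
      (∀ n, b n ≤ A * r ^ n) → (∀ n, c n ≤ A * r₀ ^ n) →
      (∀ n, A⁻¹ * r ^ n ≤ ∑ k ∈ range (n + 1), b k * c (n - k)) →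
      ∀ n, A * r / (r - r₀) * r ^ n ≤ ∑ j ∈ Icc 1 m, b (n + j) := by
  set B := A * r / (r - r₀)
  have hr₀ : 0 < r₀ := zero_lt_one.trans_le h₀
  obtain ⟨m, hm⟩ := pow_unbounded_of_one_lt (2 * A ^ 2 * B) ((one_lt_div hr₀).2 h)
  rw [div_pow, lt_div_iff₀ (pow_pos hr₀ m)] at hm
  refine ⟨m, fun b c hb hc hbA hcA hconv n => ?_⟩
  have hsplit := hconv (n + m)
  rw [sum_range_succ_add_eq_add_sum_Icc, pow_add] at hsplit
  have hhead := convolution_head_le hr₀.le h hb hc hbA hcA n m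
  have htail := convolution_tail_le hA.le h₀ hb hcA n m
  rw [show A ^ 2 * r / (r - r₀) = A * B by ring] at hhead
  have hgrowth : 2 * (A * r₀ ^ m) * (B * r ^ n) ≤ A⁻¹ * (r ^ n * r ^ m) := by
    calc 2 * (A * r₀ ^ m) * (B * r ^ n) = A⁻¹ * (r ^ n * (2 * A ^ 2 * B * r₀ ^ m)) := by
          field_simp
      _ ≤ A⁻¹ * (r ^ n * r ^ m) := by gcongr; exact pow_nonneg (hr₀.trans h).le n
  refine le_of_mul_le_mul_left ?_ (mul_pos hA (pow_pos hr₀ m))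
  linarith

end GeometricConvolution

/-- Lemma 3.3 of Hersonsky–Paulin: for every `A > 0` and `δ > δ₀ > 0` there exist
`N' ∈ ℕ` and `B > 0` such that any positive sequences `b, c` with `b n ≤ A e^{δ n}`,
`c n ≤ A e^{δ₀ n}` and convolution lower bound `∑_{k=0}^n b k c (n-k) ≥ A⁻¹ e^{δ n}`
satisfy `∑_{k=1}^{N'} b (n+k) ≥ B e^{δ n}` for all `n`. -/
theorem hersonsky_paulin_counting_lemma :
    ∀ A : ℝ, 0 < A → ∀ δ δ₀ : ℝ, 0 < δ₀ → δ₀ < δ →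
    ∃ N' : ℕ, ∃ B : ℝ, 0 < B ∧
      ∀ b c : ℕ → ℝ, (∀ n, 0 < b n) → (∀ n, 0 < c n) →
        (∀ n : ℕ, b n ≤ A * Real.exp (δ * n)) →
        (∀ n : ℕ, c n ≤ A * Real.exp (δ₀ * n)) →
        (∀ n : ℕ, A⁻¹ * Real.exp (δ * n) ≤ ∑ k ∈ Finset.range (n + 1), b k * c (n - k)) →
        ∀ n : ℕ, B * Real.exp (δ * n) ≤ ∑ k ∈ Finset.Icc 1 N', b (n + k) := by
  intro A hA δ δ₀ hδ₀ hδ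
  have hexp (x : ℝ) (n : ℕ) : Real.exp (x * n) = Real.exp x ^ n := by
    rw [mul_comm, Real.exp_nat_mul]
  have h : Real.exp δ₀ < Real.exp δ := Real.exp_lt_exp.2 hδ
  obtain ⟨m, hm⟩ := exists_sum_Icc_ge_of_convolution_ge hA (Real.one_le_exp hδ₀.le) h
  refine ⟨m, A * Real.exp δ / (Real.exp δ - Real.exp δ₀), div_pos (by positivity) (sub_pos.2 h), ?_⟩
  intro b c hb hc hbA hcA hconv
  simp only [hexp] at hbA hcA hconv ⊢
  exact hm b c (fun n => (hb n).le) (fun n => (hc n).le) hbA hcA hconv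
end

section
/- Let X be a CAT(0) space and C ⊂ X a closed convex subset. Suppose that for some σ' ≥ 0, whenever x ∈ X and y₁, y₂ ∈ C with π_C(x) ∈ [y₁,y₂], the triangle [x,y₁] ∪ [y₁,y₂] ∪ [y₂,x] is σ'-slim. Then dist(π_C(x), [x,y]) ≤ 2σ' for all x ∈ X and y ∈ C. -/
open Set Metric

/-- `γ` is a unit-speed geodesic on the interval `[a,b]`. -/
def IsGeodesicOn {X : Type*} [MetricSpace X] (γ : ℝ → X) (a b : ℝ) : Prop :=
  ∀ s ∈ Set.Icc a b, ∀ t ∈ Set.Icc a b, dist (γ s) (γ t) = |s - t|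

/-- `γ` is a unit-speed geodesic from `x` to `y`, parametrized on `[0, dist x y]`. -/
def GeodFromTo {X : Type*} [MetricSpace X] (γ : ℝ → X) (x y : X) : Prop :=
  IsGeodesicOn γ 0 (dist x y) ∧ γ 0 = x ∧ γ (dist x y) = y

/-- The geodesic segment traced by a geodesic `γ` from `x` to `y`. -/
def geodSeg {X : Type*} [MetricSpace X] (γ : ℝ → X) (x y : X) : Set X :=
  γ '' Set.Icc 0 (dist x y)

/-- A CAT(0) space: a geodesic metric space satisfying the CN (Bruhat--Tits)
midpoint inequality, which characterizes CAT(0) among geodesic spaces. -/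
class CAT0 (X : Type*) [MetricSpace X] : Prop where
  geodesic : ∀ x y : X, ∃ γ : ℝ → X, GeodFromTo γ x y
  cn : ∀ x y z m : X, dist y m = dist y z / 2 → dist m z = dist y z / 2 →
    dist x m ^ 2 ≤ (dist x y ^ 2 + dist x z ^ 2) / 2 - dist y z ^ 2 / 4

/-- A subset is (geodesically) convex if it contains every geodesic between its points. -/
def GeodConvex {X : Type*} [MetricSpace X] (C : Set X) : Prop :=
  ∀ γ : ℝ → X, ∀ a b : ℝ, a ≤ b → IsGeodesicOn γ a b → γ a ∈ C → γ b ∈ C →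
    ∀ t ∈ Set.Icc a b, γ t ∈ C

/-- `p` is the closest point projection onto `C`. -/
def IsClosestPointProj {X : Type*} [MetricSpace X] (C : Set X) (p : X → X) : Prop :=
  ∀ x : X, p x ∈ C ∧ ∀ z ∈ C, dist x (p x) ≤ dist x z

/-- `ℓ` is a (complete, unit-speed) geodesic line. -/
def IsGeodLine {X : Type*} [MetricSpace X] (ℓ : ℝ → X) : Prop :=
  ∀ s t : ℝ, dist (ℓ s) (ℓ t) = |s - t|

/-- A geodesic triangle with sides `S₁, S₂, S₃` is `σ'`-slim if each side is contained
in the `σ'`-neighborhood of the union of the other two. -/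
def SlimTri {X : Type*} [MetricSpace X] (σ' : ℝ) (S₁ S₂ S₃ : Set X) : Prop :=
  (∀ z ∈ S₁, Metric.infDist z (S₂ ∪ S₃) ≤ σ') ∧
  (∀ z ∈ S₂, Metric.infDist z (S₁ ∪ S₃) ≤ σ') ∧
  (∀ z ∈ S₃, Metric.infDist z (S₁ ∪ S₂) ≤ σ')

/-!
Let `T = d(x, π_C x)`. A point `z ∈ [x, π_C x]` at distance `t` from `π_C x` still has `π_C x`
as a closest point in `C`, so it is at distance `t` from the side `[π_C x, y] ⊆ C`. Once
`t > σ'`, slimness of the triangle `x, π_C x, y` therefore puts `z` within `σ'` of `[x, y]`,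
and `π_C x` within `t + σ'`. Letting `t ↓ σ'` gives `2σ'` (and if `T ≤ σ'`, `x ∈ [x, y]`
itself is close enough).
-/

lemma Metric.infDist_union {X : Type*} [PseudoMetricSpace X] {x : X} {s t : Set X}
    (hs : s.Nonempty) (ht : t.Nonempty) :
    infDist x (s ∪ t) = min (infDist x s) (infDist x t) := by
  rw [infDist, infEDist_union, ENNReal.toReal_min (infEDist_ne_top hs) (infEDist_ne_top ht)]
  rfl

namespace GeodFromTo

variable {X : Type*} [MetricSpace X] {γ : ℝ → X} {x y : X}

lemma left_mem_geodSeg (hγ : GeodFromTo γ x y) : x ∈ geodSeg γ x y :=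
  ⟨0, ⟨le_rfl, dist_nonneg⟩, hγ.2.1⟩

lemma dist_left (hγ : GeodFromTo γ x y) {s : ℝ} (hs : s ∈ Icc 0 (dist x y)) :
    dist x (γ s) = s := by
  rw [← hγ.2.1, hγ.1 0 ⟨le_rfl, dist_nonneg⟩ s hs, zero_sub, abs_neg, abs_of_nonneg hs.1]

lemma dist_right (hγ : GeodFromTo γ x y) {s : ℝ} (hs : s ∈ Icc 0 (dist x y)) :
    dist (γ s) y = dist x y - s := by
  rw [← hγ.2.2, hγ.1 s hs _ ⟨dist_nonneg, le_rfl⟩, hγ.2.2, abs_of_nonpos (by linarith [hs.2])]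
  ring

lemma dist_add_dist_of_mem (hγ : GeodFromTo γ x y) {z : X} (hz : z ∈ geodSeg γ x y) :
    dist x z + dist z y = dist x y := by
  obtain ⟨s, hs, rfl⟩ := hz
  rw [hγ.dist_left hs, hγ.dist_right hs]
  ring

lemma reverse (hγ : GeodFromTo γ x y) : GeodFromTo (fun t ↦ γ (dist x y - t)) y x := by
  rw [GeodFromTo, dist_comm y x]
  refine ⟨fun s hs t ht ↦ ?_, by simpa using hγ.2.2, by simpa using hγ.2.1⟩
  rw [hγ.1 _ ⟨by linarith [hs.2], by linarith [hs.1]⟩ _ ⟨by linarith [ht.2], by linarith [ht.1]⟩,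
    show dist x y - s - (dist x y - t) = -(s - t) by ring, abs_neg]

lemma geodSeg_reverse : geodSeg (fun t ↦ γ (dist x y - t)) y x = geodSeg γ x y := by
  rw [geodSeg, geodSeg, dist_comm y x, ← image_image γ (dist x y - ·), image_const_sub_Icc,
    sub_zero, sub_self]

end GeodFromTo

lemma GeodConvex.geodSeg_subset {X : Type*} [MetricSpace X] {C : Set X} (hC : GeodConvex C)
    {γ : ℝ → X} {x y : X} (hγ : GeodFromTo γ x y) (hx : x ∈ C) (hy : y ∈ C) :
    geodSeg γ x y ⊆ C := by
  rintro _ ⟨s, hs, rfl⟩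
  refine hC γ 0 (dist x y) dist_nonneg hγ.1 ?_ ?_ s hs
  · rwa [hγ.2.1]
  · rwa [hγ.2.2]

section ClosestPoint

variable {X : Type*} [MetricSpace X] {C B : Set X} {x q z : X} {σ : ℝ}

lemma dist_le_dist_of_closest_of_between (hq : ∀ c ∈ C, dist x q ≤ dist x c)
    (hz : dist x z + dist z q = dist x q) : ∀ c ∈ C, dist z q ≤ dist z c := fun c hc ↦ by
  linarith [hq c hc, dist_triangle x z c]

lemma infDist_le_add_of_closest (hqC : q ∈ C) (hq : ∀ c ∈ C, dist z q ≤ dist z c)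
    (hB : B.Nonempty) (hslim : infDist z (C ∪ B) ≤ σ) (hσ : σ < dist z q) :
    infDist q B ≤ dist z q + σ := by
  have hC : dist z q ≤ infDist z C := (le_infDist ⟨q, hqC⟩).2 hq
  have hzB : infDist z B ≤ σ := by
    rw [infDist_union ⟨q, hqC⟩ hB] at hslim
    exact (min_le_iff.1 hslim).resolve_left (by linarith)
  linarith [infDist_le_infDist_add_dist (x := q) (y := z) (s := B), dist_comm q z]

/-- `B` plays the role of the side `[x, y]`; the remaining side `[q, y] ⊆ C` is absorbed into `C`. -/
lemma infDist_le_two_mul_of_slim {γ : ℝ → X} (hγ : GeodFromTo γ x q) (hqC : q ∈ C)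
    (hq : ∀ c ∈ C, dist x q ≤ dist x c) (hxB : x ∈ B)
    (hslim : ∀ z ∈ geodSeg γ x q, infDist z (C ∪ B) ≤ σ) : infDist q B ≤ 2 * σ := by
  have hσ : 0 ≤ σ := infDist_nonneg.trans (hslim x hγ.left_mem_geodSeg)
  have hqx : infDist q B ≤ dist x q := dist_comm q x ▸ infDist_le_dist_of_mem hxB
  refine le_of_forall_gt_imp_ge_of_dense fun a ha ↦ ?_
  by_cases hT : dist x q ≤ σ
  · linarith
  set t := min (dist x q) (a - σ)
  have hσt : σ < t := lt_min (not_le.1 hT) (by linarith)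
  have hs : dist x q - t ∈ Icc 0 (dist x q) :=
    ⟨by linarith [min_le_left (dist x q) (a - σ)], by linarith⟩
  have hz : γ (dist x q - t) ∈ geodSeg γ x q := ⟨_, hs, rfl⟩
  have hzq : dist (γ (dist x q - t)) q = t := by rw [hγ.dist_right hs]; ring
  have key := infDist_le_add_of_closest hqC
    (dist_le_dist_of_closest_of_between hq (hγ.dist_add_dist_of_mem hz)) ⟨x, hxB⟩ (hslim _ hz)
    (hzq.symm ▸ hσt)
  linarith [min_le_right (dist x q) (a - σ)]

end ClosestPoint

theorem proj_close_of_slim_general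
    {X : Type*} [MetricSpace X] [CAT0 X]
    (C : Set X) (hconv : GeodConvex C)
    (p : X → X) (hp : IsClosestPointProj C p)
    (σ' : ℝ)
    (hslim : ∀ x : X, ∀ y₁ ∈ C, ∀ y₂ ∈ C, ∀ γ₁ γ₀ γ₂ : ℝ → X,
      GeodFromTo γ₁ x y₁ → GeodFromTo γ₀ y₁ y₂ → GeodFromTo γ₂ y₂ x →
      p x ∈ geodSeg γ₀ y₁ y₂ →
      SlimTri σ' (geodSeg γ₁ x y₁) (geodSeg γ₀ y₁ y₂) (geodSeg γ₂ y₂ x)) :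
    ∀ x : X, ∀ y ∈ C, ∀ γ : ℝ → X, GeodFromTo γ x y →
      Metric.infDist (p x) (geodSeg γ x y) ≤ 2 * σ' := by
  intro x y hy γ hγ
  obtain ⟨hpC, hpmin⟩ := hp x
  obtain ⟨γ₁, hγ₁⟩ := CAT0.geodesic x (p x)
  obtain ⟨γ₀, hγ₀⟩ := CAT0.geodesic (p x) y
  have hside := (hslim x (p x) hpC y hy γ₁ γ₀ _ hγ₁ hγ₀ hγ.reverse hγ₀.left_mem_geodSeg).1
  rw [GeodFromTo.geodSeg_reverse] at hside
  refine infDist_le_two_mul_of_slim hγ₁ hpC hpmin hγ.left_mem_geodSeg fun z hz ↦ ?_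
  calc infDist z (C ∪ geodSeg γ x y)
      ≤ infDist z (geodSeg γ₀ (p x) y ∪ geodSeg γ x y) :=
        infDist_le_infDist_of_subset (union_subset_union_left _ (hconv.geodSeg_subset hγ₀ hpC hy))
          ⟨p x, Or.inl hγ₀.left_mem_geodSeg⟩
    _ ≤ σ' := hside z hz

/-- Theorem 3.1, (4) ⇒ (3): if every triangle `[x,y₁] ∪ [y₁,y₂] ∪ [y₂,x]` with
`y₁, y₂ ∈ C` and `π_C x ∈ [y₁,y₂]` is `σ'`-slim, then
`dist (π_C x) [x,y] ≤ 2σ'` for all `x ∈ X` and `y ∈ C`. -/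
theorem proj_close_of_slim
    {X : Type*} [MetricSpace X] [CAT0 X]
    (C : Set X) (hclosed : IsClosed C) (hconv : GeodConvex C)
    (p : X → X) (hp : IsClosestPointProj C p)
    (σ' : ℝ) (hσ' : 0 ≤ σ')
    (hslim : ∀ x : X, ∀ y₁ ∈ C, ∀ y₂ ∈ C, ∀ γ₁ γ₀ γ₂ : ℝ → X,
      GeodFromTo γ₁ x y₁ → GeodFromTo γ₀ y₁ y₂ → GeodFromTo γ₂ y₂ x →
      p x ∈ geodSeg γ₀ y₁ y₂ →
      SlimTri σ' (geodSeg γ₁ x y₁) (geodSeg γ₀ y₁ y₂) (geodSeg γ₂ y₂ x)) :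
    ∀ x : X, ∀ y ∈ C, ∀ γ : ℝ → X, GeodFromTo γ x y →
      Metric.infDist (p x) (geodSeg γ x y) ≤ 2 * σ' :=
  proj_close_of_slim_general C hconv p hp σ' hslim
end

section
/- Let X be a CAT(0) space, C ⊂ X closed convex with projection π_C, and suppose dist(π_C(x), [x,y]) ≤ σ for all x ∈ X and y ∈ C. Then for any x ∈ X and any y in the ε-neighborhood of C: (a) dist(π_C(x), [x,y]) < ε + σ, and (b) dist(x,y) > dist(x, π_C(x)) + dist(π_C(x), y) − 2ε − 2σ. -/
open Set Metric

/-! In a CAT(0) space the distance between two geodesics issuing from a common point `x` is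
convex: if `[x,y]` and `[x,y']` are run at constant speeds over the unit interval, their points
at time `s` are at most `s · d(y,y')` apart. The CN inequality gives this at midpoints; applying
it with one endpoint at time `0` or `1` halves the error of a crude bound at each step.

Choosing `y' ∈ C` with `d(y,y') < ε`, every point of `[x,y']` is then within `d(y,y')` of
`[x,y]`, so the projection condition for `[x,y']` yields (a). For (b), compare `x`, `π_C(x)` and
`y` through a point of `[x,y]` that is `(ε + σ)`-close to `π_C(x)`. -/

open Filter Topology

def IsMetricMidpoint {X : Type*} [MetricSpace X] (a b m : X) : Prop :=
  dist a m = dist a b / 2 ∧ dist m b = dist a b / 2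

theorem IsMetricMidpoint.symm {X : Type*} [MetricSpace X] {a b m : X}
    (h : IsMetricMidpoint a b m) : IsMetricMidpoint b a m := by
  unfold IsMetricMidpoint at *
  rw [dist_comm b a, dist_comm b m, dist_comm m a]
  exact h.symm

theorem mul_dist_mem_Icc {X : Type*} [MetricSpace X] {x y : X} {s : ℝ} (hs : s ∈ Icc (0 : ℝ) 1) :
    s * dist x y ∈ Icc 0 (dist x y) :=
  ⟨mul_nonneg hs.1 dist_nonneg, mul_le_of_le_one_left dist_nonneg hs.2⟩

namespace GeodFromTo

variable {X : Type*} [MetricSpace X] {γ : ℝ → X} {x y : X}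

theorem dist_apply_mul (hγ : GeodFromTo γ x y) {s t : ℝ} (hs : s ∈ Icc (0 : ℝ) 1)
    (ht : t ∈ Icc (0 : ℝ) 1) :
    dist (γ (s * dist x y)) (γ (t * dist x y)) = |s - t| * dist x y := by
  rw [hγ.1 _ (mul_dist_mem_Icc hs) _ (mul_dist_mem_Icc ht), ← sub_mul, abs_mul,
    abs_of_nonneg (dist_nonneg (x := x) (y := y))]

theorem apply_zero_mul (hγ : GeodFromTo γ x y) : γ (0 * dist x y) = x := by
  rw [zero_mul, hγ.2.1]

theorem apply_one_mul (hγ : GeodFromTo γ x y) : γ (1 * dist x y) = y := by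
  rw [one_mul, hγ.2.2]

theorem isMetricMidpoint_apply_mul (hγ : GeodFromTo γ x y) {s t : ℝ} (hs : s ∈ Icc (0 : ℝ) 1)
    (ht : t ∈ Icc (0 : ℝ) 1) :
    IsMetricMidpoint (γ (s * dist x y)) (γ (t * dist x y)) (γ ((s + t) / 2 * dist x y)) := by
  have hst : (s + t) / 2 ∈ Icc (0 : ℝ) 1 := ⟨by linarith [hs.1, ht.1], by linarith [hs.2, ht.2]⟩
  constructor
  · rw [hγ.dist_apply_mul hs hst, hγ.dist_apply_mul hs ht,
      show s - (s + t) / 2 = (s - t) / 2 by ring, abs_div, abs_two]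
    ring
  · rw [hγ.dist_apply_mul hst ht, hγ.dist_apply_mul hs ht,
      show (s + t) / 2 - t = (s - t) / 2 by ring, abs_div, abs_two]
    ring

theorem dist_add_dist_le_add_two_mul_infDist (hγ : GeodFromTo γ x y) (z : X) :
    dist x z + dist z y ≤ dist x y + 2 * infDist z (geodSeg γ x y) := by
  have hx : x ∈ geodSeg γ x y := ⟨0, ⟨le_rfl, dist_nonneg⟩, hγ.2.1⟩
  suffices (dist x z + dist z y - dist x y) / 2 ≤ infDist z (geodSeg γ x y) by linarith
  rw [le_infDist ⟨x, hx⟩]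
  rintro _ ⟨u, hu, rfl⟩
  have hxu : dist x (γ u) = u := by
    rw [← hγ.2.1, hγ.1 0 ⟨le_rfl, dist_nonneg⟩ u hu, zero_sub, abs_neg, abs_of_nonneg hu.1]
  have huy : dist (γ u) y = dist x y - u := by
    conv_lhs => rw [← hγ.2.2]
    rw [hγ.1 u hu _ ⟨dist_nonneg, le_rfl⟩, abs_sub_comm, abs_of_nonneg (sub_nonneg.2 hu.2)]
  linarith [dist_triangle x (γ u) z, dist_triangle z (γ u) y, dist_comm z (γ u)]

end GeodFromTo

namespace CAT0

variable {X : Type*} [MetricSpace X] [CAT0 X]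

theorem exists_isMetricMidpoint (a b : X) : ∃ m, IsMetricMidpoint a b m := by
  obtain ⟨γ, hγ⟩ := CAT0.geodesic a b
  have h := hγ.isMetricMidpoint_apply_mul (s := 0) (t := 1) ⟨le_rfl, zero_le_one⟩
    ⟨zero_le_one, le_rfl⟩
  rw [hγ.apply_zero_mul, hγ.apply_one_mul] at h
  exact ⟨_, h⟩

theorem dist_isMetricMidpoint_le_of_left_eq {a b b' m m' : X} (hm : IsMetricMidpoint a b m)
    (hm' : IsMetricMidpoint a b' m') : dist m m' ≤ dist b b' / 2 := by
  have hcn_b' := CAT0.cn b' a b m hm.1 hm.2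
  have hcn_m := CAT0.cn m a b' m' hm'.1 hm'.2
  rw [dist_comm m a, hm.1, dist_comm m b'] at hcn_m
  rw [dist_comm b' a, dist_comm b' b] at hcn_b'
  have hsq : dist m m' ^ 2 ≤ (dist b b' / 2) ^ 2 := by linarith
  exact (pow_le_pow_iff_left₀ dist_nonneg (by positivity) two_ne_zero).1 hsq

theorem dist_isMetricMidpoint_le {a b a' b' m m' : X} (hm : IsMetricMidpoint a b m)
    (hm' : IsMetricMidpoint a' b' m') : dist m m' ≤ (dist a a' + dist b b') / 2 := by
  obtain ⟨q, hq⟩ := exists_isMetricMidpoint a b'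
  have hmq := dist_isMetricMidpoint_le_of_left_eq hm hq
  have hqm' := dist_isMetricMidpoint_le_of_left_eq hq.symm hm'.symm
  linarith [dist_triangle m q m', dist_comm b' a]

end CAT0

section GeodesicConvexity

variable {X : Type*} [MetricSpace X] [CAT0 X] {γ γ' : ℝ → X} {x y y' : X}

theorem GeodFromTo.dist_apply_mul_midpoint_le (hγ : GeodFromTo γ x y) (hγ' : GeodFromTo γ' x y')
    {s t : ℝ} (hs : s ∈ Icc (0 : ℝ) 1) (ht : t ∈ Icc (0 : ℝ) 1) :
    dist (γ ((s + t) / 2 * dist x y)) (γ' ((s + t) / 2 * dist x y')) ≤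
      (dist (γ (s * dist x y)) (γ' (s * dist x y')) +
        dist (γ (t * dist x y)) (γ' (t * dist x y'))) / 2 :=
  CAT0.dist_isMetricMidpoint_le (hγ.isMetricMidpoint_apply_mul hs ht)
    (hγ'.isMetricMidpoint_apply_mul hs ht)

theorem GeodFromTo.dist_apply_mul_le_add_div_two_pow (hγ : GeodFromTo γ x y)
    (hγ' : GeodFromTo γ' x y') (n : ℕ) {s : ℝ} (hs : s ∈ Icc (0 : ℝ) 1) :
    dist (γ (s * dist x y)) (γ' (s * dist x y')) ≤
      s * dist y y' + (dist x y + dist x y') / 2 ^ n := by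
  have h0 : (0 : ℝ) ∈ Icc (0 : ℝ) 1 := ⟨le_rfl, zero_le_one⟩
  have h1 : (1 : ℝ) ∈ Icc (0 : ℝ) 1 := ⟨zero_le_one, le_rfl⟩
  induction n generalizing s with
  | zero =>
    have hxγ := hγ.dist_apply_mul h0 hs
    have hxγ' := hγ'.dist_apply_mul h0 hs
    rw [hγ.apply_zero_mul, zero_sub, abs_neg, abs_of_nonneg hs.1] at hxγ
    rw [hγ'.apply_zero_mul, zero_sub, abs_neg, abs_of_nonneg hs.1] at hxγ'
    rw [pow_zero, div_one]
    linarith [dist_triangle_left (γ (s * dist x y)) (γ' (s * dist x y')) x,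
      mul_le_of_le_one_left (dist_nonneg (x := x) (y := y)) hs.2,
      mul_le_of_le_one_left (dist_nonneg (x := x) (y := y')) hs.2,
      mul_nonneg hs.1 (dist_nonneg (x := y) (y := y'))]
  | succ n ih =>
    have hpow : (dist x y + dist x y') / 2 ^ (n + 1) = (dist x y + dist x y') / 2 ^ n / 2 := by
      rw [pow_succ, div_div]
    rw [hpow]
    -- `s` is the midpoint of `0` and `2s`, or of `2s - 1` and `1`.
    rcases le_total s (1 / 2) with hs2 | hs2
    · have h2s : 2 * s ∈ Icc (0 : ℝ) 1 := ⟨by linarith [hs.1], by linarith⟩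
      have hmid := hγ.dist_apply_mul_midpoint_le hγ' h0 h2s
      rw [show (0 + 2 * s) / 2 = s by ring, hγ.apply_zero_mul, hγ'.apply_zero_mul,
        dist_self] at hmid
      linarith [ih h2s]
    · have h2s : 2 * s - 1 ∈ Icc (0 : ℝ) 1 := ⟨by linarith, by linarith [hs.2]⟩
      have hmid := hγ.dist_apply_mul_midpoint_le hγ' h2s h1
      rw [show (2 * s - 1 + 1) / 2 = s by ring, hγ.apply_one_mul, hγ'.apply_one_mul] at hmid
      linarith [ih h2s]

theorem GeodFromTo.dist_apply_mul_le (hγ : GeodFromTo γ x y) (hγ' : GeodFromTo γ' x y')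
    {s : ℝ} (hs : s ∈ Icc (0 : ℝ) 1) :
    dist (γ (s * dist x y)) (γ' (s * dist x y')) ≤ s * dist y y' := by
  have hlim : Tendsto (fun n : ℕ ↦ s * dist y y' + (dist x y + dist x y') / 2 ^ n) atTop
      (𝓝 (s * dist y y' + 0)) :=
    tendsto_const_nhds.add
      (tendsto_const_nhds.div_atTop (tendsto_pow_atTop_atTop_of_one_lt one_lt_two))
  rw [add_zero] at hlim
  exact ge_of_tendsto' hlim fun n ↦ hγ.dist_apply_mul_le_add_div_two_pow hγ' n hs

theorem GeodFromTo.infDist_geodSeg_le (hγ : GeodFromTo γ x y) (hγ' : GeodFromTo γ' x y')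
    (z : X) : infDist z (geodSeg γ x y) ≤ infDist z (geodSeg γ' x y') + dist y y' := by
  have hx : x ∈ geodSeg γ' x y' := ⟨0, ⟨le_rfl, dist_nonneg⟩, hγ'.2.1⟩
  suffices infDist z (geodSeg γ x y) - dist y y' ≤ infDist z (geodSeg γ' x y') by linarith
  rw [le_infDist ⟨x, hx⟩]
  rintro _ ⟨t, ht, rfl⟩
  set s := t / dist x y'
  have hs : s ∈ Icc (0 : ℝ) 1 := ⟨div_nonneg ht.1 dist_nonneg, div_le_one_of_le₀ ht.2 dist_nonneg⟩
  have hts : s * dist x y' = t :=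
    div_mul_cancel_of_imp fun h ↦ le_antisymm (h ▸ ht.2) ht.1
  have hclose := hγ.dist_apply_mul_le hγ' hs
  rw [hts] at hclose
  have hmem : γ (s * dist x y) ∈ geodSeg γ x y := ⟨_, mul_dist_mem_Icc hs, rfl⟩
  have hsD := mul_le_of_le_one_left (dist_nonneg (x := y) (y := y')) hs.2
  linarith [infDist_le_dist_of_mem (x := z) hmem, dist_triangle_right z (γ (s * dist x y)) (γ' t)]

end GeodesicConvexity

theorem proj_estimates_near_Morse_general
    {X : Type*} [MetricSpace X] [CAT0 X]
    (C : Set X) (hCne : C.Nonempty)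
    (p : X → X)
    (σ : ℝ)
    (hproj : ∀ x : X, ∀ y ∈ C, ∀ γ : ℝ → X, GeodFromTo γ x y →
      Metric.infDist (p x) (geodSeg γ x y) ≤ σ)
    (ε : ℝ)
    (x y : X) (hy : Metric.infDist y C < ε)
    (γ : ℝ → X) (hγ : GeodFromTo γ x y) :
    Metric.infDist (p x) (geodSeg γ x y) < ε + σ ∧
    dist x (p x) + dist (p x) y - 2 * ε - 2 * σ < dist x y := by
  obtain ⟨y', hy'C, hyy'⟩ := (infDist_lt_iff hCne).1 hy
  obtain ⟨γ', hγ'⟩ := CAT0.geodesic x y'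
  have hnear : infDist (p x) (geodSeg γ x y) < ε + σ := by
    calc infDist (p x) (geodSeg γ x y) ≤ infDist (p x) (geodSeg γ' x y') + dist y y' :=
          hγ.infDist_geodSeg_le hγ' (p x)
      _ < ε + σ := by linarith [hproj x y' hy'C γ' hγ']
  exact ⟨hnear, by linarith [hγ.dist_add_dist_le_add_two_mul_infDist (p x)]⟩

/-- Proposition 3.3(1): if `C` satisfies the projection condition with constant `σ`,
then for `x ∈ X` and `y` in the `ε`-neighborhood of `C`:
(a) `dist (π_C x) [x,y] < ε + σ`, and
(b) `dist x y > dist x (π_C x) + dist (π_C x) y - 2ε - 2σ`. -/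
theorem proj_estimates_near_Morse
    {X : Type*} [MetricSpace X] [CAT0 X]
    (C : Set X) (hclosed : IsClosed C) (hconv : GeodConvex C) (hCne : C.Nonempty)
    (p : X → X) (hp : IsClosestPointProj C p)
    (σ : ℝ) (hσ : 0 ≤ σ)
    (hproj : ∀ x : X, ∀ y ∈ C, ∀ γ : ℝ → X, GeodFromTo γ x y →
      Metric.infDist (p x) (geodSeg γ x y) ≤ σ)
    (ε : ℝ) (hε : 0 < ε)
    (x y : X) (hy : Metric.infDist y C < ε)
    (γ : ℝ → X) (hγ : GeodFromTo γ x y) :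
    Metric.infDist (p x) (geodSeg γ x y) < ε + σ ∧
    dist x (p x) + dist (p x) y - 2 * ε - 2 * σ < dist x y :=
  proj_estimates_near_Morse_general C hCne p σ hproj ε x y hy γ hγ
end

section
/- Let X be a proper CAT(0) space, C a closed convex Morse subset with projection constant σ, and let C' be the convex hull of C together with all geodesic lines in X parallel to a geodesic line in C. Then C' is contained in the closed σ-neighborhood of C, and C' contains every geodesic line in X parallel to a geodesic line in C'. -/
/-!
The closed `σ`-neighbourhood `N` of `C` is convex, since in a CAT(0) space the distance to a
convex set is convex along geodesics. It also contains every geodesic line `ℓ` parallel to a line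
in `C`: `t ↦ d(ℓ t, C)` is convex and bounded, hence constant, and a long geodesic from `ℓ 0` to
the parallel line stays close to `ℓ` near `ℓ 0`, where the Morse property puts it within `σ` of
the projection of `ℓ 0`. Hence `C' ⊆ N`.

Conversely, a line `ℓ₂` in `C' ⊆ N` stays within `2σ` of the geodesics joining projections onto
`C` of its far-away points. In the proper space `X` these geodesics subconverge (Tychonoff) to a
line in `C` at distance at most `2σ` from `ℓ₂`, so every line parallel to `ℓ₂` is parallel to a
line in `C` and lies in `C'`.
-/

open Set Metric

/-- `ℓ` is parallel to a geodesic line contained in `C`. -/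
def ParallelToLineIn {X : Type*} [MetricSpace X] (C : Set X) (ℓ : ℝ → X) : Prop :=
  ∃ ℓ₂ : ℝ → X, IsGeodLine ℓ₂ ∧ (∀ t : ℝ, ℓ₂ t ∈ C) ∧ ∃ M : ℝ, ∀ t : ℝ, dist (ℓ t) (ℓ₂ t) ≤ M

namespace Real

theorem Icc_subset_of_isClosed_of_midpoint_mem {a b : ℝ} {S : Set ℝ} (hS : IsClosed S)
    (ha : a ∈ S) (hb : b ∈ S) (hmid : ∀ s ∈ S, ∀ t ∈ S, (s + t) / 2 ∈ S) : Icc a b ⊆ S := by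
  intro u hu
  by_contra huS
  have hlo : sSup (S ∩ Iic u) ∈ S ∩ Iic u :=
    (hS.inter isClosed_Iic).csSup_mem ⟨a, ha, hu.1⟩ ⟨u, fun _ hx => hx.2⟩
  have hhi : sInf (S ∩ Ici u) ∈ S ∩ Ici u :=
    (hS.inter isClosed_Ici).csInf_mem ⟨b, hb, hu.2⟩ ⟨u, fun _ hx => hx.2⟩
  set α := sSup (S ∩ Iic u)
  set β := sInf (S ∩ Ici u)
  have hαu : α < u := lt_of_le_of_ne hlo.2 fun h => huS (h ▸ hlo.1)
  have huβ : u < β := lt_of_le_of_ne' hhi.2 fun h => huS (h ▸ hhi.1)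
  -- the midpoint of the two points of `S` closest to `u` lies in `S`, on one side of `u`
  rcases le_total ((α + β) / 2) u with h | h
  · have : (α + β) / 2 ≤ α := le_csSup ⟨u, fun _ hx => hx.2⟩ ⟨hmid α hlo.1 β hhi.1, h⟩
    linarith
  · have : β ≤ (α + β) / 2 := csInf_le ⟨u, fun _ hx => hx.2⟩ ⟨hmid α hlo.1 β hhi.1, h⟩
    linarith

theorem convexOn_Icc_of_midpoint_le {f : ℝ → ℝ} {a b : ℝ} (hf : ContinuousOn f (Icc a b))
    (hmid : ∀ s ∈ Icc a b, ∀ t ∈ Icc a b, f ((s + t) / 2) ≤ (f s + f t) / 2) :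
    ConvexOn ℝ (Icc a b) f := by
  refine ⟨convex_Icc a b, fun x hx y hy μ ν hμ hν hμν => ?_⟩
  set c : ℝ → ℝ := fun θ => (1 - θ) * x + θ * y with hc_def
  have hc : MapsTo c (Icc 0 1) (Icc a b) := fun θ hθ =>
    convex_Icc a b hx hy (by linarith [hθ.2]) hθ.1 (by ring)
  have hc_mid : ∀ s t, c ((s + t) / 2) = (c s + c t) / 2 := fun s t => by
    simp only [hc_def]; ring
  have hchord : Icc 0 1 ⊆ {θ ∈ Icc 0 1 | f (c θ) ≤ (1 - θ) * f x + θ * f y} := by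
    refine Icc_subset_of_isClosed_of_midpoint_mem
      (isClosed_Icc.isClosed_le (hf.comp (by fun_prop) hc) (by fun_prop))
      ⟨left_mem_Icc.2 zero_le_one, by simp [hc_def]⟩
      ⟨right_mem_Icc.2 zero_le_one, by simp [hc_def]⟩ ?_
    rintro s ⟨hs, hfs⟩ t ⟨ht, hft⟩
    refine ⟨⟨by linarith [hs.1, ht.1], by linarith [hs.2, ht.2]⟩, ?_⟩
    rw [hc_mid]
    linarith [hmid _ (hc hs) _ (hc ht)]
  have := (hchord ⟨hν, by linarith⟩).2
  obtain rfl : μ = 1 - ν := by linarith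
  simpa [hc_def] using this

theorem apply_eq_of_midpoint_le_of_bddAbove {f : ℝ → ℝ} (hf : BddAbove (range f))
    (hmid : ∀ s t, f ((s + t) / 2) ≤ (f s + f t) / 2) (s t : ℝ) : f s = f t := by
  obtain ⟨M, hM⟩ := hf
  suffices H : ∀ s t, f t ≤ f s from le_antisymm (H t s) (H s t)
  intro s t
  by_contra! hlt
  -- the increment `f t - f s` at least doubles each time the step `t - s` doubles
  have hgrowth : ∀ n : ℕ, f s + 2 ^ n * (f t - f s) ≤ f (s + 2 ^ n * (t - s)) := by
    intro n
    induction n with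
    | zero => simp
    | succ n ih =>
      have h := hmid s (s + 2 ^ (n + 1) * (t - s))
      rw [show (s + (s + 2 ^ (n + 1) * (t - s))) / 2 = s + 2 ^ n * (t - s) by ring] at h
      rw [pow_succ] at h ⊢
      linarith
  obtain ⟨n, hn⟩ := pow_unbounded_of_one_lt ((M - f s) / (f t - f s)) one_lt_two
  rw [div_lt_iff₀ (sub_pos.2 hlt)] at hn
  linarith [hgrowth n, hM (mem_range_self (s + 2 ^ n * (t - s)))]

end Real

section Geodesic

variable {X : Type*} [MetricSpace X]

theorem IsGeodLine.isGeodesicOn {ℓ : ℝ → X} (hℓ : IsGeodLine ℓ) (a b : ℝ) :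
    IsGeodesicOn ℓ a b :=
  fun s _ t _ => hℓ s t

theorem IsGeodesicOn.continuousOn {γ : ℝ → X} {a b : ℝ} (hγ : IsGeodesicOn γ a b) :
    ContinuousOn γ (Icc a b) :=
  (LipschitzOnWith.of_dist_le' (K := 1) fun s hs t ht => by
    rw [hγ s hs t ht, one_mul, Real.dist_eq]).continuousOn

theorem IsGeodesicOn.dist_midpoint {γ : ℝ → X} {a b : ℝ} (hγ : IsGeodesicOn γ a b) {s t : ℝ}
    (hs : s ∈ Icc a b) (ht : t ∈ Icc a b) :
    dist (γ s) (γ ((s + t) / 2)) = dist (γ s) (γ t) / 2 ∧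
      dist (γ ((s + t) / 2)) (γ t) = dist (γ s) (γ t) / 2 := by
  have hm : (s + t) / 2 ∈ Icc a b := ⟨by linarith [hs.1, ht.1], by linarith [hs.2, ht.2]⟩
  rw [hγ s hs _ hm, hγ _ hm t ht, hγ s hs t ht, show s - (s + t) / 2 = (s - t) / 2 by ring,
    show (s + t) / 2 - t = (s - t) / 2 by ring, abs_div, abs_two]
  exact ⟨rfl, rfl⟩

theorem GeodFromTo.dist_midpoint {γ : ℝ → X} {x y : X} (hγ : GeodFromTo γ x y) :
    dist x (γ (dist x y / 2)) = dist x y / 2 ∧ dist (γ (dist x y / 2)) y = dist x y / 2 := by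
  obtain ⟨hγ, h0, h1⟩ := hγ
  have := hγ.dist_midpoint (left_mem_Icc.2 dist_nonneg) (right_mem_Icc.2 dist_nonneg)
  rwa [h0, h1, zero_add] at this

end Geodesic

section CAT0

variable {X : Type*} [MetricSpace X] [CAT0 X]

theorem CAT0.exists_midpoint (x y : X) :
    ∃ m : X, dist x m = dist x y / 2 ∧ dist m y = dist x y / 2 := by
  obtain ⟨γ, hγ⟩ := CAT0.geodesic x y
  exact ⟨_, hγ.dist_midpoint⟩

theorem CAT0.dist_midpoint_midpoint_le_half {a u v m₁ m₂ : X}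
    (h₁ : dist a m₁ = dist a u / 2) (h₁' : dist m₁ u = dist a u / 2)
    (h₂ : dist a m₂ = dist a v / 2) (h₂' : dist m₂ v = dist a v / 2) :
    dist m₁ m₂ ≤ dist u v / 2 := by
  have hu := CAT0.cn u a v m₂ h₂ h₂'
  have hm := CAT0.cn m₂ a u m₁ h₁ h₁'
  rw [dist_comm m₂ a, h₂, dist_comm m₂ u, dist_comm m₂ m₁] at hm
  rw [dist_comm u a] at hu
  have hsq : dist m₁ m₂ ^ 2 ≤ (dist u v / 2) ^ 2 := by nlinarith
  exact (pow_le_pow_iff_left₀ dist_nonneg (by positivity) two_ne_zero).1 hsq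

theorem CAT0.dist_midpoint_midpoint_le {x y x' y' m m' : X}
    (h : dist x m = dist x y / 2) (h' : dist m y = dist x y / 2)
    (k : dist x' m' = dist x' y' / 2) (k' : dist m' y' = dist x' y' / 2) :
    dist m m' ≤ (dist x x' + dist y y') / 2 := by
  obtain ⟨q, hq, hq'⟩ := CAT0.exists_midpoint x y'
  have hmq : dist m q ≤ dist y y' / 2 := CAT0.dist_midpoint_midpoint_le_half h h' hq hq'
  have hqm : dist q m' ≤ dist x x' / 2 := by
    rw [dist_comm x y'] at hq hq'
    rw [dist_comm x' y'] at k k'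
    exact CAT0.dist_midpoint_midpoint_le_half (by rwa [dist_comm]) (by rwa [dist_comm])
      (by rwa [dist_comm]) (by rwa [dist_comm])
  linarith [dist_triangle m q m']

theorem GeodConvex.exists_midpoint_mem {C : Set X} (hC : GeodConvex C) {x y : X}
    (hx : x ∈ C) (hy : y ∈ C) :
    ∃ m ∈ C, dist x m = dist x y / 2 ∧ dist m y = dist x y / 2 := by
  obtain ⟨γ, hγ⟩ := CAT0.geodesic x y
  have hd : 0 ≤ dist x y := dist_nonneg
  refine ⟨γ (dist x y / 2), ?_, hγ.dist_midpoint⟩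
  exact hC γ 0 _ hd hγ.1 (by rwa [hγ.2.1]) (by rwa [hγ.2.2]) _ ⟨by linarith, by linarith⟩

theorem GeodConvex.infDist_midpoint_le {C : Set X} (hC : GeodConvex C) {x y m : X}
    (h : dist x m = dist x y / 2) (h' : dist m y = dist x y / 2) :
    infDist m C ≤ (infDist x C + infDist y C) / 2 := by
  rcases C.eq_empty_or_nonempty with rfl | hne
  · simp
  have hpair : ∀ c ∈ C, ∀ c' ∈ C, 2 * infDist m C - dist y c' ≤ dist x c := by
    intro c hc c' hc'
    obtain ⟨q, hq, hcq, hqc'⟩ := hC.exists_midpoint_mem hc hc'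
    linarith [infDist_le_dist_of_mem (x := m) hq, CAT0.dist_midpoint_midpoint_le h h' hcq hqc']
  have hright : ∀ c' ∈ C, 2 * infDist m C - infDist x C ≤ dist y c' := fun c' hc' => by
    linarith [(le_infDist hne).2 fun c hc => hpair c hc c' hc']
  linarith [(le_infDist hne).2 hright]

theorem IsGeodesicOn.convexOn_dist {γ₁ γ₂ : ℝ → X} {a b : ℝ} (h₁ : IsGeodesicOn γ₁ a b)
    (h₂ : IsGeodesicOn γ₂ a b) : ConvexOn ℝ (Icc a b) fun t => dist (γ₁ t) (γ₂ t) :=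
  Real.convexOn_Icc_of_midpoint_le
    (continuous_dist.comp_continuousOn (h₁.continuousOn.prodMk h₂.continuousOn)) fun _ hs _ ht =>
    CAT0.dist_midpoint_midpoint_le (h₁.dist_midpoint hs ht).1 (h₁.dist_midpoint hs ht).2
      (h₂.dist_midpoint hs ht).1 (h₂.dist_midpoint hs ht).2

theorem IsGeodesicOn.dist_le_div_mul_of_apply_zero_eq {γ ℓ : ℝ → X} {L : ℝ} (hL : 0 < L)
    (hγ : IsGeodesicOn γ 0 L) (hℓ : IsGeodLine ℓ) (h0 : γ 0 = ℓ 0) {u : ℝ} (hu : u ∈ Icc 0 L) :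
    dist (γ u) (ℓ u) ≤ u / L * dist (γ L) (ℓ L) := by
  have := (hγ.convexOn_dist (hℓ.isGeodesicOn 0 L)).2 (left_mem_Icc.2 hL.le)
    (right_mem_Icc.2 hL.le) (sub_nonneg.2 ((div_le_one hL).2 hu.2)) (div_nonneg hu.1 hL.le)
    (sub_add_cancel 1 (u / L))
  simpa only [smul_eq_mul, mul_zero, zero_add, h0, dist_self, div_mul_cancel₀ u hL.ne']
    using this

theorem IsGeodesicOn.convexOn_infDist {C : Set X} (hC : GeodConvex C) {γ : ℝ → X} {a b : ℝ}
    (hγ : IsGeodesicOn γ a b) : ConvexOn ℝ (Icc a b) fun t => infDist (γ t) C :=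
  Real.convexOn_Icc_of_midpoint_le ((continuous_infDist_pt C).comp_continuousOn hγ.continuousOn)
    fun _ hs _ ht => hC.infDist_midpoint_le (hγ.dist_midpoint hs ht).1 (hγ.dist_midpoint hs ht).2

theorem GeodConvex.setOf_infDist_le {C : Set X} (hC : GeodConvex C) (r : ℝ) :
    GeodConvex {x | infDist x C ≤ r} := by
  intro γ a b hab hγ ha hb t ht
  refine ((hγ.convexOn_infDist hC).le_on_segment (left_mem_Icc.2 hab) (right_mem_Icc.2 hab)
    ?_).trans (max_le ha hb)
  rwa [segment_eq_Icc hab]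

theorem IsGeodLine.infDist_eq_of_parallelToLineIn {C : Set X} (hC : GeodConvex C) {ℓ : ℝ → X}
    (hℓ : IsGeodLine ℓ) (hpar : ParallelToLineIn C ℓ) (s t : ℝ) :
    infDist (ℓ s) C = infDist (ℓ t) C := by
  obtain ⟨ℓ₂, -, hℓ₂C, M, hM⟩ := hpar
  refine Real.apply_eq_of_midpoint_le_of_bddAbove (f := fun t => infDist (ℓ t) C)
    ⟨M, ?_⟩ (fun s t => ?_) s t
  · rintro _ ⟨t, rfl⟩
    exact (infDist_le_dist_of_mem (hℓ₂C t)).trans (hM t)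
  · have hmid := (hℓ.isGeodesicOn (min s t) (max s t)).dist_midpoint
      ⟨min_le_left s t, le_max_left s t⟩ ⟨min_le_right s t, le_max_right s t⟩
    exact hC.infDist_midpoint_le hmid.1 hmid.2

end CAT0

section Morse

variable {X : Type*} [MetricSpace X] [CAT0 X] {C : Set X} {p : X → X} {σ : ℝ}

theorem IsGeodLine.exists_infDist_le_of_dist_le (hp : IsClosestPointProj C p)
    (hproj : ∀ x : X, ∀ y ∈ C, ∀ γ : ℝ → X, GeodFromTo γ x y → infDist (p x) (geodSeg γ x y) ≤ σ)
    {ℓ ℓ₂ : ℝ → X} (hℓ : IsGeodLine ℓ) (hℓ₂C : ∀ t, ℓ₂ t ∈ C) {M : ℝ}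
    (hM : ∀ t, dist (ℓ t) (ℓ₂ t) ≤ M) {n : ℝ} (hn : 0 < n) :
    ∃ u, infDist (ℓ u) C ≤ σ + 2 * M * (M + σ) / n := by
  have hM0 : 0 ≤ M := dist_nonneg.trans (hM 0)
  set T := M + n
  set L := dist (ℓ 0) (ℓ₂ T)
  obtain ⟨γ, hγ, hγ0, hγL⟩ : ∃ γ, IsGeodesicOn γ 0 L ∧ γ 0 = ℓ 0 ∧ γ L = ℓ₂ T :=
    CAT0.geodesic _ _
  have hL0 : 0 ≤ L := dist_nonneg
  have hℓT : ∀ s, dist (ℓ s) (ℓ T) = |s - T| := fun s => hℓ s T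
  have hnL : n ≤ L := by
    have := dist_triangle (ℓ 0) (ℓ₂ T) (ℓ T)
    rw [hℓT, dist_comm (ℓ₂ T), abs_of_nonpos (by linarith)] at this
    linarith [hM T]
  have hLT : L ≤ T + M := by
    have := dist_triangle (ℓ 0) (ℓ T) (ℓ₂ T)
    rw [hℓT, abs_of_nonpos (by linarith)] at this
    linarith [hM T]
  have hend : dist (γ L) (ℓ L) ≤ 2 * M := by
    have hLT' : |L - T| ≤ M := abs_le.2 ⟨by linarith, by linarith⟩
    rw [hγL, dist_comm (ℓ₂ T)]
    linarith [dist_triangle (ℓ L) (ℓ T) (ℓ₂ T), hℓT L, hM T]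
  obtain ⟨_, ⟨u, hu, rfl⟩, hpu⟩ :=
    (isCompact_Icc.image_of_continuousOn hγ.continuousOn).exists_infDist_eq_dist
      ⟨γ 0, 0, left_mem_Icc.2 hL0, rfl⟩ (p (ℓ 0))
  have hpγ : dist (p (ℓ 0)) (γ u) ≤ σ := hpu ▸ hproj _ _ (hℓ₂C T) γ ⟨hγ, hγ0, hγL⟩
  have hu_eq : dist (ℓ 0) (γ u) = u := by
    rw [← hγ0, hγ 0 (left_mem_Icc.2 hL0) u hu, zero_sub, abs_neg, abs_of_nonneg hu.1]
  have hu_le : u ≤ M + σ := by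
    linarith [dist_triangle (ℓ 0) (p (ℓ 0)) (γ u), (hp (ℓ 0)).2 _ (hℓ₂C 0), hM 0]
  have hchord : dist (γ u) (ℓ u) ≤ u / L * (2 * M) :=
    (hγ.dist_le_div_mul_of_apply_zero_eq (hn.trans_le hnL) hℓ hγ0 hu).trans
      (mul_le_mul_of_nonneg_left hend (div_nonneg hu.1 hL0))
  have hratio : u / L ≤ (M + σ) / n :=
    div_le_div₀ (hu.1.trans hu_le) hu_le hn hnL
  refine ⟨u, (infDist_le_dist_of_mem (hp (ℓ 0)).1).trans ?_⟩
  calc dist (ℓ u) (p (ℓ 0)) ≤ dist (γ u) (ℓ u) + dist (p (ℓ 0)) (γ u) := by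
        rw [dist_comm (γ u), dist_comm (p _)]
        exact dist_triangle _ _ _
    _ ≤ u / L * (2 * M) + σ := add_le_add hchord hpγ
    _ ≤ (M + σ) / n * (2 * M) + σ := by gcongr
    _ = σ + 2 * M * (M + σ) / n := by ring

theorem IsGeodLine.infDist_le_of_parallelToLineIn (hC : GeodConvex C)
    (hp : IsClosestPointProj C p)
    (hproj : ∀ x : X, ∀ y ∈ C, ∀ γ : ℝ → X, GeodFromTo γ x y → infDist (p x) (geodSeg γ x y) ≤ σ)
    {ℓ : ℝ → X} (hℓ : IsGeodLine ℓ) (hpar : ParallelToLineIn C ℓ) (t : ℝ) :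
    infDist (ℓ t) C ≤ σ := by
  have hconst := hℓ.infDist_eq_of_parallelToLineIn hC hpar t
  obtain ⟨ℓ₂, -, hℓ₂C, M, hM⟩ := hpar
  have hbound : ∀ n : ℕ, 1 ≤ n → infDist (ℓ t) C ≤ σ + 2 * M * (M + σ) / n := by
    intro n hn
    obtain ⟨u, hu⟩ := hℓ.exists_infDist_le_of_dist_le hp hproj hℓ₂C hM (n := n) (by positivity)
    rwa [hconst u]
  have hlim : Filter.Tendsto (fun n : ℕ => σ + 2 * M * (M + σ) / n) Filter.atTop (nhds σ) := by
    simpa using tendsto_const_nhds.add (tendsto_const_div_atTop_nhds_zero_nat (2 * M * (M + σ)))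
  exact ge_of_tendsto hlim (Filter.eventually_atTop.2 ⟨1, hbound⟩)

end Morse

theorem exists_isGeodLine_of_forall_isGeodesicOn {X : Type*} [MetricSpace X] {K : ℝ → Set X}
    (hK : ∀ t, IsCompact (K t))
    (h : ∀ R, ∃ f : ℝ → X, (∀ t, f t ∈ K t) ∧ IsGeodesicOn f (-R) R) :
    ∃ ℓ, IsGeodLine ℓ ∧ ∀ t, ℓ t ∈ K t := by
  set F : ℝ × ℝ → Set (ℝ → X) := fun q => {f | dist (f q.1) (f q.2) = |q.1 - q.2|}
  have hF : ∀ q, IsClosed (F q) := fun q => isClosed_eq (by fun_prop) continuous_const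
  suffices ((univ : Set ℝ).pi K ∩ ⋂ q, F q).Nonempty by
    obtain ⟨ℓ, hℓK, hℓF⟩ := this
    exact ⟨ℓ, fun s t => mem_iInter.1 hℓF (s, t), fun t => hℓK t (mem_univ t)⟩
  -- by Tychonoff, finitely many constraints `F q` suffice, and they only involve a bounded range
  by_contra hempty
  obtain ⟨w, hw⟩ := (isCompact_univ_pi hK).elim_finite_subfamily_closed F hF
    (not_nonempty_iff_eq_empty.1 hempty)
  obtain ⟨R, hR⟩ := (w.image fun q => max |q.1| |q.2|).exists_le
  obtain ⟨f, hfK, hf⟩ := h R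
  refine (eq_empty_iff_forall_notMem.1 hw) f ⟨fun t _ => hfK t, mem_iInter₂.2 fun q hq => ?_⟩
  have hqR := hR _ (Finset.mem_image_of_mem _ hq)
  exact hf q.1 (abs_le.1 ((le_max_left _ _).trans hqR)) q.2
    (abs_le.1 ((le_max_right _ _).trans hqR))

section Parallel

variable {X : Type*} [MetricSpace X] [CAT0 X] {C : Set X}

theorem IsGeodLine.exists_isGeodesicOn_dist_le (hC : GeodConvex C) {ℓ : ℝ → X}
    (hℓ : IsGeodLine ℓ) {c₁ c₂ : X} (hc₁ : c₁ ∈ C) (hc₂ : c₂ ∈ C) {n r : ℝ} (hn : 0 ≤ n)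
    (h₁ : dist (ℓ (-n)) c₁ ≤ r) (h₂ : dist (ℓ n) c₂ ≤ r) :
    ∃ a, n - r ≤ a ∧ ∃ g : ℝ → X, IsGeodesicOn g (-a) a ∧
      ∀ t ∈ Icc (-a) a, g t ∈ C ∧ dist (ℓ t) (g t) ≤ 2 * r := by
  set L := dist c₁ c₂
  obtain ⟨γ, hγ, hγ0, hγL⟩ : ∃ γ, IsGeodesicOn γ 0 L ∧ γ 0 = c₁ ∧ γ L = c₂ :=
    CAT0.geodesic c₁ c₂
  have hL0 : 0 ≤ L := dist_nonneg
  have hℓn : dist (ℓ (-n)) (ℓ n) = 2 * n := by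
    rw [hℓ, abs_of_nonpos (by linarith)]; ring
  have hLn : |L / 2 - n| ≤ r := abs_le.2
    ⟨by linarith [dist_triangle4 (ℓ (-n)) c₁ c₂ (ℓ n), dist_comm c₂ (ℓ n)],
     by linarith [dist_triangle4 c₁ (ℓ (-n)) (ℓ n) c₂, dist_comm c₁ (ℓ (-n))]⟩
  have hshift : ∀ t ∈ Icc (-(L / 2)) (L / 2), L / 2 + t ∈ Icc 0 L := fun t ht =>
    ⟨by linarith [ht.1], by linarith [ht.2]⟩
  have hg : IsGeodesicOn (fun t => γ (L / 2 + t)) (-(L / 2)) (L / 2) := fun s hs t ht => by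
    rw [hγ _ (hshift s hs) _ (hshift t ht), add_sub_add_left_eq_sub]
  have hends : ∀ t ∈ ({-(L / 2), L / 2} : Set ℝ), dist (ℓ t) (γ (L / 2 + t)) ≤ 2 * r := by
    rintro t (rfl | rfl)
    · rw [add_neg_cancel, hγ0]
      have : dist (ℓ (-(L / 2))) (ℓ (-n)) = |L / 2 - n| := by
        rw [hℓ, ← abs_neg]
        congr 1
        ring
      linarith [dist_triangle (ℓ (-(L / 2))) (ℓ (-n)) c₁]
    · rw [add_halves, hγL]
      linarith [dist_triangle (ℓ (L / 2)) (ℓ n) c₂, hℓ (L / 2) n]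
  refine ⟨L / 2, by linarith [(abs_le.1 hLn).1], _, hg, fun t ht => ⟨?_, ?_⟩⟩
  · exact hC γ 0 L hL0 hγ (by rwa [hγ0]) (by rwa [hγL]) _ (hshift t ht)
  · have hab : -(L / 2) ≤ L / 2 := by linarith
    refine ((hℓ.isGeodesicOn _ _).convexOn_dist hg).le_on_segment (left_mem_Icc.2 hab)
      (right_mem_Icc.2 hab) (by rwa [segment_eq_Icc hab]) |>.trans (max_le ?_ ?_)
    · exact hends _ (mem_insert _ _)
    · exact hends _ (mem_insert_of_mem _ rfl)

theorem IsGeodLine.exists_isGeodLine_dist_le [ProperSpace X] (hC : GeodConvex C)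
    (hCc : IsClosed C) {ℓ : ℝ → X} (hℓ : IsGeodLine ℓ) {r : ℝ}
    (hr : ∀ t, ∃ c ∈ C, dist (ℓ t) c ≤ r) :
    ∃ ℓ', IsGeodLine ℓ' ∧ (∀ t, ℓ' t ∈ C) ∧ ∀ t, dist (ℓ t) (ℓ' t) ≤ 2 * r := by
  choose c hcC hc using hr
  have hr0 : 0 ≤ r := dist_nonneg.trans (hc 0)
  have hfinite : ∀ R, ∃ f : ℝ → X, (∀ t, f t ∈ C ∩ closedBall (ℓ t) (2 * r)) ∧
      IsGeodesicOn f (-R) R := by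
    intro R
    obtain ⟨a, ha, g, hg, hgC⟩ := hℓ.exists_isGeodesicOn_dist_le hC (hcC (-(|R| + r)))
      (hcC (|R| + r)) (by positivity) (hc _) (hc _)
    have hRa : Icc (-R) R ⊆ Icc (-a) a :=
      Icc_subset_Icc (by linarith [le_abs_self R]) (by linarith [le_abs_self R])
    classical
    refine ⟨fun t => if t ∈ Icc (-a) a then g t else c t, fun t => ?_, fun s hs t ht => ?_⟩
    · dsimp only
      split_ifs with ht
      · exact ⟨(hgC t ht).1, mem_closedBall.2 (by rw [dist_comm]; exact (hgC t ht).2)⟩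
      · exact ⟨hcC t, mem_closedBall.2 (by rw [dist_comm]; linarith [hc t])⟩
    · simp only [if_pos (hRa hs), if_pos (hRa ht)]
      exact hg s (hRa hs) t (hRa ht)
  obtain ⟨ℓ', hℓ', hK⟩ := exists_isGeodLine_of_forall_isGeodesicOn
    (fun t => (isCompact_closedBall _ _).inter_left hCc) hfinite
  exact ⟨ℓ', hℓ', fun t => (hK t).1, fun t => by rw [dist_comm]; exact (hK t).2⟩

end Parallel

theorem IsClosestPointProj.dist_le_infDist {X : Type*} [MetricSpace X] {C : Set X} {p : X → X}
    (hp : IsClosestPointProj C p) (x : X) : dist x (p x) ≤ infDist x C :=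
  (le_infDist ⟨p x, (hp x).1⟩).2 (hp x).2

theorem convex_hull_of_parallel_lines_general
    {X : Type*} [MetricSpace X] [ProperSpace X] [CAT0 X]
    (C : Set X) (hclosed : IsClosed C) (hconv : GeodConvex C)
    (p : X → X) (hp : IsClosestPointProj C p)
    (σ : ℝ) (hσ : 0 ≤ σ)
    (hproj : ∀ x : X, ∀ y ∈ C, ∀ γ : ℝ → X, GeodFromTo γ x y →
      Metric.infDist (p x) (geodSeg γ x y) ≤ σ)
    (C' : Set X)
    (hC' : C' = ⋂₀ {D : Set X | GeodConvex D ∧ C ⊆ D ∧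
      ∀ ℓ : ℝ → X, IsGeodLine ℓ → ParallelToLineIn C ℓ → Set.range ℓ ⊆ D}) :
    C' ⊆ {x : X | Metric.infDist x C ≤ σ} ∧
    ∀ ℓ : ℝ → X, IsGeodLine ℓ → ParallelToLineIn C' ℓ → Set.range ℓ ⊆ C' := by
  have hN : {x : X | infDist x C ≤ σ} ∈ {D : Set X | GeodConvex D ∧ C ⊆ D ∧
      ∀ ℓ : ℝ → X, IsGeodLine ℓ → ParallelToLineIn C ℓ → Set.range ℓ ⊆ D} :=
    ⟨hconv.setOf_infDist_le σ, fun x hx => (infDist_zero_of_mem hx).trans_le hσ,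
      fun ℓ hℓ hpar => range_subset_iff.2 (hℓ.infDist_le_of_parallelToLineIn hconv hp hproj hpar)⟩
  have hC'N : C' ⊆ {x : X | infDist x C ≤ σ} := hC' ▸ sInter_subset_of_mem hN
  refine ⟨hC'N, ?_⟩
  rintro ℓ hℓ ⟨ℓ₂, hℓ₂, hℓ₂C', M, hM⟩
  obtain ⟨ℓ₃, hℓ₃, hℓ₃C, hℓ₂₃⟩ := hℓ₂.exists_isGeodLine_dist_le hconv hclosed
    fun t => ⟨p (ℓ₂ t), (hp _).1, (hp.dist_le_infDist _).trans (hC'N (hℓ₂C' t))⟩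
  rw [hC']
  exact subset_sInter fun D hD => hD.2.2 ℓ hℓ ⟨ℓ₃, hℓ₃, hℓ₃C, M + 2 * σ, fun t =>
    (dist_triangle _ (ℓ₂ t) _).trans (add_le_add (hM t) (hℓ₂₃ t))⟩

/-- Proposition 3.5: if `C` is a closed convex Morse subset with projection constant `σ`
and `C'` is the convex hull of `C` together with all geodesic lines parallel to a
geodesic line in `C`, then `C'` lies in the closed `σ`-neighborhood of `C`, and `C'`
contains every geodesic line parallel to a geodesic line in `C'`. -/
theorem convex_hull_of_parallel_lines
    {X : Type*} [MetricSpace X] [ProperSpace X] [CAT0 X]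
    (C : Set X) (hclosed : IsClosed C) (hconv : GeodConvex C) (hCne : C.Nonempty)
    (p : X → X) (hp : IsClosestPointProj C p)
    (σ : ℝ) (hσ : 0 ≤ σ)
    (hproj : ∀ x : X, ∀ y ∈ C, ∀ γ : ℝ → X, GeodFromTo γ x y →
      Metric.infDist (p x) (geodSeg γ x y) ≤ σ)
    (C' : Set X)
    (hC' : C' = ⋂₀ {D : Set X | GeodConvex D ∧ C ⊆ D ∧
      ∀ ℓ : ℝ → X, IsGeodLine ℓ → ParallelToLineIn C ℓ → Set.range ℓ ⊆ D}) :
    C' ⊆ {x : X | Metric.infDist x C ≤ σ} ∧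
    ∀ ℓ : ℝ → X, IsGeodLine ℓ → ParallelToLineIn C' ℓ → Set.range ℓ ⊆ C' :=
  convex_hull_of_parallel_lines_general C hclosed hconv p hp σ hσ hproj C' hC'
end

section
/- Let δ > δ₀ > 0 and suppose 1 = n₁ < n₂ < ⋯ is a sequence such that ∑_{n=n_j}^{n_{j+1}−1} e^{−(δ−δ₀)φ(n)} Q(φ(n)) > j for all j ≥ 1, where φ : [0,∞) → [0,∞) is slowly varying and Q is a positive polynomial. Define ψ(t) = (δ−δ₀)^{−1} log √j for n_j ≤ t < n_{j+1}. Then ψ is nonnegative, slowly varying, and the series ∑_{n} e^{−(δ−δ₀)(φ+ψ)(n)} Q((φ+ψ)(n)) diverges. -/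
open Finset

/-- `f : [0,∞) → ℝ` is slowly varying: there are `B, A > 0` such that `|x - y| ≤ B`
implies `|f x - f y| ≤ A`. -/
def SlowlyVarying (f : ℝ → ℝ) : Prop :=
  ∃ B : ℝ, 0 < B ∧ ∃ A : ℝ, 0 < A ∧
    ∀ x y : ℝ, 0 ≤ x → 0 ≤ y → |x - y| ≤ B → |f x - f y| ≤ A

/-!
On the block `[n j, n (j + 1))` the shift `ψ = (δ - δ₀)⁻¹ log √j` multiplies each exponential
weight by `1 / √j`, while the polynomial factor loses at most a fixed factor `ε`, because a
polynomial that is positive on `[0, ∞)` is increasing near `∞`. So each block of the new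
series still has mass at least `ε √j ≥ ε`, and the series diverges. Consecutive blocks change
`ψ` by at most `(δ - δ₀)⁻¹ log 2`, which makes `ψ` slowly varying.
-/

open Filter Set Polynomial Real

theorem exists_pos_mul_le_of_monotoneOn_Ici {f : ℝ → ℝ} (hf : Continuous f)
    (hpos : ∀ x, 0 ≤ x → 0 < f x) {C : ℝ} (hmono : MonotoneOn f (Ici C)) :
    ∃ ε > 0, ∀ x y, 0 ≤ x → x ≤ y → ε * f x ≤ f y := by
  wlog hC : 0 ≤ C generalizing C
  · exact this (hmono.mono (Ici_subset_Ici.mpr (le_max_left C 0))) (le_max_right C 0)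
  obtain ⟨a, ha, hmin⟩ := isCompact_Icc.exists_isMinOn (nonempty_Icc.mpr hC) hf.continuousOn
  obtain ⟨b, hb, hmax⟩ := isCompact_Icc.exists_isMaxOn (nonempty_Icc.mpr hC) hf.continuousOn
  have hfa := hpos a ha.1
  have hfb := hpos b hb.1
  have hε : f a / f b ≤ 1 :=
    (div_le_one hfb).mpr ((hmin (right_mem_Icc.mpr hC)).trans (hmax (right_mem_Icc.mpr hC)))
  refine ⟨f a / f b, by positivity, fun x y hx hxy => ?_⟩
  rcases le_or_gt C x with hCx | hxC
  · calc f a / f b * f x ≤ f x := mul_le_of_le_one_left (hpos x hx).le hε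
      _ ≤ f y := hmono hCx (hCx.trans hxy) hxy
  · have hfy : f a ≤ f y := by
      rcases le_or_gt y C with hyC | hCy
      · exact hmin ⟨hx.trans hxy, hyC⟩
      · exact (hmin (right_mem_Icc.mpr hC)).trans (hmono self_mem_Ici hCy.le hCy.le)
    calc f a / f b * f x ≤ f a / f b * f b :=
          mul_le_mul_of_nonneg_left (hmax ⟨hx, hxC.le⟩) (by positivity)
      _ = f a := div_mul_cancel₀ _ hfb.ne'
      _ ≤ f y := hfy

namespace Polynomial

theorem eventually_nonneg_of_leadingCoeff_nonneg (P : ℝ[X]) (hP : 0 ≤ P.leadingCoeff) :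
    ∀ᶠ x in atTop, 0 ≤ P.eval x := by
  rcases hP.eq_or_lt with hP | hP
  · simp [leadingCoeff_eq_zero.mp hP.symm]
  · have hlead : ∀ᶠ x : ℝ in atTop, 0 < P.leadingCoeff * x ^ P.natDegree :=
      (eventually_gt_atTop 0).mono fun x hx => by positivity
    exact ((isEquivalent_atTop_lead P).eventually_pos hlead).mono fun _ h => h.le

theorem leadingCoeff_nonneg_of_eventually_pos (P : ℝ[X])
    (hP : ∀ᶠ x in atTop, 0 < P.eval x) : 0 ≤ P.leadingCoeff := by
  by_contra! hneg
  have hnegP := eventually_nonneg_of_leadingCoeff_nonneg (-P) (by simpa using hneg.le)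
  obtain ⟨x, hpos, hnonpos⟩ := (hP.and hnegP).exists
  simp only [eval_neg, neg_nonneg] at hnonpos
  exact hpos.not_ge hnonpos

theorem exists_monotoneOn_Ici_of_leadingCoeff_nonneg (P : ℝ[X]) (hP : 0 ≤ P.leadingCoeff) :
    ∃ C, MonotoneOn P.eval (Ici C) := by
  have hderiv : 0 ≤ (derivative P).leadingCoeff := by
    rw [leadingCoeff_derivative]; positivity
  obtain ⟨C, hC⟩ := eventually_atTop.mp (eventually_nonneg_of_leadingCoeff_nonneg _ hderiv)
  refine ⟨C, monotoneOn_of_deriv_nonneg (convex_Ici C) P.continuous.continuousOn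
    P.differentiable.differentiableOn fun x hx => ?_⟩
  rw [interior_Ici] at hx
  simpa only [Polynomial.deriv] using hC x (le_of_lt hx)

theorem exists_pos_mul_eval_le (Q : ℝ[X]) (hQ : ∀ x, 0 ≤ x → 0 < Q.eval x) :
    ∃ ε > 0, ∀ x y, 0 ≤ x → x ≤ y → ε * Q.eval x ≤ Q.eval y := by
  have hlead := Q.leadingCoeff_nonneg_of_eventually_pos
    ((eventually_ge_atTop 0).mono hQ)
  obtain ⟨C, hC⟩ := Q.exists_monotoneOn_Ici_of_leadingCoeff_nonneg hlead
  exact exists_pos_mul_le_of_monotoneOn_Ici Q.continuous hQ hC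

end Polynomial

section Blocks

variable {n : ℕ → ℕ}

theorem StrictMono.exists_mem_Ico_of_map_zero (hn : StrictMono n) (hn0 : n 0 = 0) {t : ℝ}
    (ht : 0 ≤ t) : ∃ j, (n j : ℝ) ≤ t ∧ t < n (j + 1) := by
  have hex : ∃ k, t < n k :=
    ⟨⌊t⌋₊ + 1, (Nat.lt_floor_add_one t).trans_le (by exact_mod_cast hn.le_apply)⟩
  have hk0 : Nat.find hex ≠ 0 := fun h => (Nat.find_spec hex).not_ge (by simpa [h, hn0])
  refine ⟨Nat.find hex - 1, not_lt.mp (Nat.find_min hex (by omega)), ?_⟩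
  simpa [Nat.sub_add_cancel (Nat.one_le_iff_ne_zero.mpr hk0)] using Nat.find_spec hex

theorem StrictMono.eq_or_eq_succ_of_mem_Ico (hn : StrictMono n) {x y : ℝ} {i j : ℕ}
    (hxy : x ≤ y) (hyx : y ≤ x + 1) (hx : (n i : ℝ) ≤ x ∧ x < n (i + 1))
    (hy : (n j : ℝ) ≤ y ∧ y < n (j + 1)) : j = i ∨ j = i + 1 := by
  have hij : i < j + 1 := hn.lt_iff_lt.mp (by exact_mod_cast hx.1.trans_lt (hxy.trans_lt hy.2))
  have hji : (n j : ℝ) < n (i + 1) + 1 := by linarith [hx.2, hy.1]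
  have := hn.le_iff_le.mp (Nat.lt_succ_iff.mp (by exact_mod_cast hji))
  omega

theorem slowlyVarying_of_eq_on_Ico (hn : StrictMono n) (hn0 : n 0 = 0) {g : ℕ → ℝ} {A : ℝ}
    (hA : 0 < A) (hg : ∀ j, |g (j + 1) - g j| ≤ A) {ψ : ℝ → ℝ}
    (hψ : ∀ j (t : ℝ), n j ≤ t → t < n (j + 1) → ψ t = g j) : SlowlyVarying ψ := by
  suffices key : ∀ x y, 0 ≤ x → x ≤ y → y ≤ x + 1 → |ψ y - ψ x| ≤ A by
    refine ⟨1, one_pos, A, hA, fun x y hx hy hxy => ?_⟩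
    rcases le_total x y with h | h
    · rw [abs_sub_comm]
      exact key x y hx h (by linarith [abs_le.mp hxy])
    · exact key y x hy h (by linarith [abs_le.mp hxy])
  intro x y hx hxy hyx
  obtain ⟨i, hxi⟩ := hn.exists_mem_Ico_of_map_zero hn0 hx
  obtain ⟨j, hyj⟩ := hn.exists_mem_Ico_of_map_zero hn0 (hx.trans hxy)
  rw [hψ i x hxi.1 hxi.2, hψ j y hyj.1 hyj.2]
  rcases hn.eq_or_eq_succ_of_mem_Ico hxy hyx hxi hyj with rfl | rfl
  · simpa using hA.le
  · exact hg i

theorem not_summable_of_le_sum_Ico (hn : StrictMono n) {f : ℕ → ℝ} {ε : ℝ} (hε : 0 < ε)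
    (hf : ∀ᶠ j in atTop, ε ≤ ∑ k ∈ Ico (n j) (n (j + 1)), f k) : ¬Summable f := by
  intro hsum
  have hpartial := hsum.hasSum.tendsto_sum_nat.comp hn.tendsto_atTop
  have hblock : Tendsto (fun j => ∑ k ∈ Ico (n j) (n (j + 1)), f k) atTop (nhds 0) := by
    have hdiff := (hpartial.comp (tendsto_add_atTop_nat 1)).sub hpartial
    rw [sub_self] at hdiff
    refine hdiff.congr fun j => ?_
    simp [sum_Ico_eq_sub _ (hn (Nat.lt_succ_self j)).le]
  obtain ⟨j, hlt, hle⟩ := ((hblock.eventually_lt_const hε).and hf).exists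
  exact hlt.not_ge hle

end Blocks

theorem Real.abs_log_sqrt_natCast_succ_sub_le (j : ℕ) :
    |log √((j + 1 : ℕ) : ℝ) - log √(j : ℝ)| ≤ log 2 := by
  rcases Nat.eq_zero_or_pos j with rfl | hj
  · simpa using log_nonneg one_le_two
  have hj' : (1 : ℝ) ≤ j := by exact_mod_cast hj
  have hle : log j ≤ log (j + 1) := log_le_log (by positivity) (by linarith)
  have hstep : log (j + 1) ≤ log 2 + log j := by
    rw [← log_mul two_ne_zero (by positivity)]
    exact log_le_log (by positivity) (by linarith)
  rw [Nat.cast_succ, log_sqrt (by positivity), log_sqrt (by positivity),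
    abs_of_nonneg (by linarith)]
  linarith

theorem Real.exp_neg_mul_add_inv_mul_log {a x : ℝ} (ha : a ≠ 0) (hx : 0 < x) (u : ℝ) :
    exp (-a * (u + a⁻¹ * log x)) = exp (-a * u) / x := by
  have hexponent : -a * (u + a⁻¹ * log x) = -a * u - log x := by
    field_simp
    ring
  rw [hexponent, exp_sub, exp_log hx]

theorem le_sum_exp_mul_eval_add {a ε : ℝ} (ha : 0 < a) (hε : 0 ≤ ε) {Q : ℝ[X]}
    (hQ : ∀ x y, 0 ≤ x → x ≤ y → ε * Q.eval x ≤ Q.eval y) {φ ψ : ℕ → ℝ}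
    (hφ : ∀ k, 0 ≤ φ k) {s : Finset ℕ} {j : ℕ} (hj : 1 ≤ j)
    (hψ : ∀ k ∈ s, ψ k = a⁻¹ * log √(j : ℝ))
    (hs : (j : ℝ) < ∑ k ∈ s, exp (-a * φ k) * Q.eval (φ k)) :
    ε ≤ ∑ k ∈ s, exp (-a * (φ k + ψ k)) * Q.eval (φ k + ψ k) := by
  have hsqrt : 1 ≤ √(j : ℝ) := one_le_sqrt.mpr (by exact_mod_cast hj)
  have hψ0 : ∀ k ∈ s, 0 ≤ ψ k := fun k hk => by
    rw [hψ k hk]; exact mul_nonneg (inv_nonneg.mpr ha.le) (log_nonneg hsqrt)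
  have hterm : ∀ k ∈ s, ε / √(j : ℝ) * (exp (-a * φ k) * Q.eval (φ k)) ≤
      exp (-a * (φ k + ψ k)) * Q.eval (φ k + ψ k) := fun k hk => by
    rw [hψ k hk, exp_neg_mul_add_inv_mul_log ha.ne' (by positivity), ← hψ k hk]
    calc ε / √(j : ℝ) * (exp (-a * φ k) * Q.eval (φ k))
        = exp (-a * φ k) / √(j : ℝ) * (ε * Q.eval (φ k)) := by ring
      _ ≤ exp (-a * φ k) / √(j : ℝ) * Q.eval (φ k + ψ k) := by
        gcongr
        exact hQ _ _ (hφ k) (le_add_of_nonneg_right (hψ0 k hk))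
  calc ε ≤ ε * √(j : ℝ) := le_mul_of_one_le_right hε hsqrt
    _ = ε / √(j : ℝ) * j := by rw [div_mul_eq_mul_div, mul_div_assoc, div_sqrt]
    _ ≤ ε / √(j : ℝ) * ∑ k ∈ s, exp (-a * φ k) * Q.eval (φ k) := by gcongr
    _ ≤ _ := by rw [mul_sum]; exact sum_le_sum hterm

theorem psi_construction_general
    (δ δ₀ : ℝ) (hδ : δ₀ < δ)
    (φ : ℝ → ℝ) (hφ0 : ∀ t : ℝ, 0 ≤ t → 0 ≤ φ t)
    (Q : Polynomial ℝ) (hQ : ∀ x : ℝ, 0 < Q.eval x)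
    (n : ℕ → ℕ) (hmono : StrictMono n) (hn1 : n 1 = 1)
    (hsum : ∀ j : ℕ, 1 ≤ j →
      (j : ℝ) < ∑ k ∈ Finset.Ico (n j) (n (j + 1)),
        Real.exp (-(δ - δ₀) * φ k) * Q.eval (φ k))
    (ψ : ℝ → ℝ)
    (hψdef : ∀ j : ℕ, 1 ≤ j → ∀ t : ℝ, (n j : ℝ) ≤ t → t < n (j + 1) →
      ψ t = (δ - δ₀)⁻¹ * Real.log (Real.sqrt j))
    (hψ0 : ∀ t : ℝ, 0 ≤ t → t < 1 → ψ t = 0) :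
    (∀ t : ℝ, 0 ≤ t → 0 ≤ ψ t) ∧ SlowlyVarying ψ ∧
      ¬ Summable (fun k : ℕ =>
        Real.exp (-(δ - δ₀) * (φ k + ψ k)) * Q.eval (φ k + ψ k)) := by
  have ha : 0 < δ - δ₀ := sub_pos.mpr hδ
  have hn0 : n 0 = 0 := by have := hmono zero_lt_one; omega
  set g : ℕ → ℝ := fun j => (δ - δ₀)⁻¹ * log √(j : ℝ)
  -- As `log 0 = 0`, the formula also covers the block `[n 0, n 1) = [0, 1)`, where `ψ = 0`.
  have hψg : ∀ j (t : ℝ), n j ≤ t → t < n (j + 1) → ψ t = g j := by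
    rintro (_ | j) t hjt htj
    · simp [g, hψ0 t (by simpa [hn0] using hjt) (by simpa [hn1] using htj)]
    · exact hψdef (j + 1) j.succ_pos t hjt htj
  have hg : ∀ j, |g (j + 1) - g j| ≤ (δ - δ₀)⁻¹ * log 2 := fun j => by
    rw [← mul_sub, abs_mul, abs_of_pos (inv_pos.mpr ha)]
    exact mul_le_mul_of_nonneg_left (abs_log_sqrt_natCast_succ_sub_le j) (inv_pos.mpr ha).le
  refine ⟨fun t ht => ?_, slowlyVarying_of_eq_on_Ico hmono hn0
    (mul_pos (inv_pos.mpr ha) (log_pos one_lt_two)) hg hψg, ?_⟩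
  · obtain ⟨j, hjt, htj⟩ := hmono.exists_mem_Ico_of_map_zero hn0 ht
    rw [hψg j t hjt htj]
    refine mul_nonneg (inv_nonneg.mpr ha.le) ?_
    rw [log_sqrt j.cast_nonneg]
    exact div_nonneg (log_natCast_nonneg j) zero_le_two
  · obtain ⟨ε, hε, hQε⟩ := Q.exists_pos_mul_eval_le fun x _ => hQ x
    refine not_summable_of_le_sum_Ico hmono hε ((eventually_ge_atTop 1).mono fun j hj => ?_)
    refine le_sum_exp_mul_eval_add ha hε.le hQε (fun k => hφ0 k k.cast_nonneg) hj
      (fun k hk => ?_) (hsum j hj)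
    obtain ⟨hjk, hkj⟩ := mem_Ico.mp hk
    exact hψdef j hj k (by exact_mod_cast hjk) (by exact_mod_cast hkj)

/-- The key construction from Lemma 6.6: given `δ > δ₀ > 0`, a slowly varying
nonnegative `φ`, a positive polynomial `Q`, and indices `1 = n₁ < n₂ < ⋯` with
`∑_{n = n_j}^{n_{j+1}-1} e^{-(δ-δ₀)φ(n)} Q(φ(n)) > j`, the function
`ψ(t) = (δ-δ₀)⁻¹ log √j` on `[n_j, n_{j+1})` is nonnegative, slowly varying, and
`∑_n e^{-(δ-δ₀)(φ+ψ)(n)} Q((φ+ψ)(n))` diverges. -/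
theorem psi_construction
    (δ δ₀ : ℝ) (h0 : 0 < δ₀) (hδ : δ₀ < δ)
    (φ : ℝ → ℝ) (hφ0 : ∀ t : ℝ, 0 ≤ t → 0 ≤ φ t) (hφ : SlowlyVarying φ)
    (Q : Polynomial ℝ) (hQ : ∀ x : ℝ, 0 < Q.eval x)
    (n : ℕ → ℕ) (hmono : StrictMono n) (hn1 : n 1 = 1)
    (hsum : ∀ j : ℕ, 1 ≤ j →
      (j : ℝ) < ∑ k ∈ Finset.Ico (n j) (n (j + 1)),
        Real.exp (-(δ - δ₀) * φ k) * Q.eval (φ k))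
    (ψ : ℝ → ℝ)
    (hψdef : ∀ j : ℕ, 1 ≤ j → ∀ t : ℝ, (n j : ℝ) ≤ t → t < n (j + 1) →
      ψ t = (δ - δ₀)⁻¹ * Real.log (Real.sqrt j))
    (hψ0 : ∀ t : ℝ, 0 ≤ t → t < 1 → ψ t = 0) :
    (∀ t : ℝ, 0 ≤ t → 0 ≤ ψ t) ∧ SlowlyVarying ψ ∧
      ¬ Summable (fun k : ℕ =>
        Real.exp (-(δ - δ₀) * (φ k + ψ k)) * Q.eval (φ k + ψ k)) :=
  psi_construction_general δ δ₀ hδ φ hφ0 Q hQ n hmono hn1 hsum ψ hψdef hψ0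
end
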